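/- Contour-independence and unitarity of Faddeev's quantum dilogarithm: let b > 0 be a real number and z ∈ ℝ. For δ ∈ (0, π·min(b, 1/b)) define I(δ) = ∫_{−∞}^{∞} e^{−2√−1·z·(x+√−1·δ)} / (sinh((x+√−1·δ)·b) · sinh((x+√−1·δ)/b)) · dx/(x+√−1·δ). Then (i) this integral converges absolutely for every such δ; (ii) I(δ) = I(δ′) for all δ, δ′ ∈ (0, π·min(b, 1/b)); and (iii) |exp(−I(δ)/4)| = 1, i.e. the real part of I(δ) is zero. -/

import Mathlib

/-!
On the strip `0 < Im w < π·min(b, 1/b)` the integrand is holomorphic, and the estimate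
`|sinh(u + iv)| ≥ |Im sinh(u + iv)| = cosh u·|sin v|` bounds it by `C·(1 + x²)⁻¹` uniformly on
compact sub-strips. So it is integrable on every horizontal line, and Cauchy's theorem on the
rectangles `[-R, R] × [δ, δ']`, whose vertical sides vanish as `R → ∞`, moves the line.
For unitarity, the integrand satisfies `conj f(w) = -f(-conj w)`; on a horizontal line this
reads `conj g(x) = -g(-x)`, so the integral is purely imaginary.
-/

open MeasureTheory Real

/-- The contour integral defining Faddeev's quantum dilogarithm: the integral of
`e^{-2√-1 z w} / (sinh(wb) sinh(w/b) w)` over the horizontal line `w = x + √-1 δ`,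
`x ∈ ℝ`. -/
noncomputable def faddeevIntegral (b z δ : ℝ) : ℂ :=
  ∫ x : ℝ,
    Complex.exp (-2 * Complex.I * (z : ℂ) * ((x : ℂ) + Complex.I * (δ : ℂ))) /
      (Complex.sinh (((x : ℂ) + Complex.I * (δ : ℂ)) * (b : ℂ)) *
        Complex.sinh (((x : ℂ) + Complex.I * (δ : ℂ)) / (b : ℂ))) *
      (1 / ((x : ℂ) + Complex.I * (δ : ℂ)))

open Complex Filter Topology Set
open scoped Interval ComplexConjugate

theorem Complex.cosh_re_mul_abs_sin_im_le_norm_sinh (w : ℂ) :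
    Real.cosh w.re * |Real.sin w.im| ≤ ‖Complex.sinh w‖ := by
  have him : (Complex.sinh w).im = Real.cosh w.re * Real.sin w.im := by
    conv_lhs => rw [← re_add_im w]
    rw [Complex.sinh_add, sinh_mul_I, cosh_mul_I, ← ofReal_sinh, ← ofReal_cosh]
    simp [Complex.sin_ofReal_re]
  calc Real.cosh w.re * |Real.sin w.im| = |(Complex.sinh w).im| := by
        rw [him, abs_mul, abs_of_pos (Real.cosh_pos _)]
    _ ≤ ‖Complex.sinh w‖ := abs_im_le_norm _

theorem Real.one_add_abs_le_two_mul_cosh (t : ℝ) : 1 + |t| ≤ 2 * Real.cosh t := by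
  rw [← Real.cosh_abs, Real.cosh_eq]
  linarith [Real.add_one_le_exp |t|, Real.exp_pos (-|t|)]

theorem tendsto_inv_one_add_sq_cocompact :
    Tendsto (fun x : ℝ => (1 + x ^ 2)⁻¹) (cocompact ℝ) (𝓝 0) := by
  refine tendsto_inv_atTop_zero.comp (tendsto_atTop_add_const_left _ _ ?_)
  simpa [Function.comp_def] using (tendsto_pow_atTop two_ne_zero).comp
    (tendsto_norm_cocompact_atTop (E := ℝ))

theorem integral_add_mul_I_eq_of_differentiableOn_strip {E : Type*} [NormedAddCommGroup E]
    [NormedSpace ℂ E] [CompleteSpace E] {f : ℂ → E} {y₁ y₂ : ℝ} {g : ℝ → ℝ}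
    (hf : DifferentiableOn ℂ f (univ ×ℂ [[y₁, y₂]]))
    (hfg : ∀ x : ℝ, ∀ y ∈ [[y₁, y₂]], ‖f (x + y * I)‖ ≤ g x)
    (hg : Tendsto g (cocompact ℝ) (𝓝 0))
    (h₁ : Integrable fun x : ℝ => f (x + y₁ * I)) (h₂ : Integrable fun x : ℝ => f (x + y₂ * I)) :
    ∫ x : ℝ, f (x + y₁ * I) = ∫ x : ℝ, f (x + y₂ * I) := by
  set V : ℝ → E := fun s => ∫ y in y₁..y₂, f (s + y * I)
  have hV : Tendsto V (cocompact ℝ) (𝓝 0) := by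
    refine squeeze_zero_norm (fun s => ?_) (by simpa using hg.mul_const |y₂ - y₁|)
    exact intervalIntegral.norm_integral_le_of_norm_le_const fun y hy =>
      hfg s y (uIoc_subset_uIcc hy)
  have hrect : ∀ R : ℝ, (∫ x in -R..R, f (x + y₁ * I)) - ∫ x in -R..R, f (x + y₂ * I) =
      I • V (-R) - I • V R := by
    intro R
    have := integral_boundary_rect_eq_zero_of_differentiableOn f (-R + y₁ * I) (R + y₂ * I)
      (hf.mono (by simp [subset_def, mem_reProdIm]))
    simp only [add_re, add_im, neg_re, neg_im, ofReal_re, ofReal_im, mul_re, mul_im, I_re, I_im,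
      mul_zero, mul_one, sub_zero, zero_add, add_zero, neg_zero, ofReal_neg] at this
    simp only [V, ofReal_neg]
    rw [← sub_eq_zero, ← this]
    abel
  have hlim := ((intervalIntegral_tendsto_integral h₁ tendsto_neg_atTop_atBot tendsto_id).sub
    (intervalIntegral_tendsto_integral h₂ tendsto_neg_atTop_atBot tendsto_id)).congr hrect
  have h0 : Tendsto (fun R : ℝ => I • V (-R) - I • V R) atTop (𝓝 0) := by
    simpa using ((hV.comp (tendsto_neg_atTop_atBot.mono_right atBot_le_cocompact)).const_smul I).sub
      ((hV.comp (atTop_le_cocompact (α := ℝ))).const_smul I)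
  exact sub_eq_zero.1 (tendsto_nhds_unique hlim h0)

theorem re_integral_eq_zero_of_conj_eq_neg_comp_neg {g : ℝ → ℂ} (hg : ∀ x, conj (g x) = -g (-x)) :
    (∫ x, g x).re = 0 := by
  have hconj : conj (∫ x, g x) = -∫ x, g x := by
    rw [← integral_conj]
    simp_rw [hg]
    rw [integral_neg, integral_neg_eq_self g]
  have := congrArg re hconj
  rw [conj_re, neg_re] at this
  linarith

noncomputable def faddeevIntegrand (b z : ℝ) (w : ℂ) : ℂ :=
  cexp (-2 * I * z * w) / (Complex.sinh (w * b) * Complex.sinh (w / b)) * (1 / w)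

theorem faddeevIntegrand_ofReal_add_mul_I (b z x δ : ℝ) :
    faddeevIntegrand b z (x + δ * I) =
      cexp (-2 * I * z * (x + I * δ)) / (Complex.sinh ((x + I * δ) * b) *
        Complex.sinh ((x + I * δ) / b)) * (1 / (x + I * δ)) := by
  rw [mul_comm (δ : ℂ) I, faddeevIntegrand]

theorem faddeevIntegral_eq_integral_faddeevIntegrand (b z δ : ℝ) :
    faddeevIntegral b z δ = ∫ x : ℝ, faddeevIntegrand b z (x + δ * I) := by
  simp only [faddeevIntegral, faddeevIntegrand_ofReal_add_mul_I]

theorem conj_faddeevIntegrand (b z : ℝ) (w : ℂ) :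
    conj (faddeevIntegrand b z w) = -faddeevIntegrand b z (-conj w) := by
  simp only [faddeevIntegrand, map_mul, map_div₀, map_one, ← Complex.exp_conj, ← Complex.sinh_conj,
    map_neg, map_ofNat, conj_I, conj_ofReal, neg_mul, neg_div, Complex.sinh_neg]
  ring_nf

-- No hypothesis on `δ`: the symmetry is pointwise, and a non-integrable integral is `0`.
theorem faddeevIntegral_re (b z δ : ℝ) : (faddeevIntegral b z δ).re = 0 := by
  rw [faddeevIntegral_eq_integral_faddeevIntegrand]
  refine re_integral_eq_zero_of_conj_eq_neg_comp_neg fun x => ?_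
  rw [conj_faddeevIntegrand]
  congr 2
  simp only [map_add, map_mul, conj_ofReal, conj_I, ofReal_neg]
  ring

theorem sin_mul_pos_and_sin_div_pos {b y : ℝ} (hb : 0 < b) (hy : y ∈ Ioo 0 (π * min b b⁻¹)) :
    0 < Real.sin (y * b) ∧ 0 < Real.sin (y / b) := by
  have hyb : y * b < π := by
    have := hy.2.trans_le (mul_le_mul_of_nonneg_left (min_le_right b b⁻¹) pi_pos.le)
    rwa [← div_eq_mul_inv, lt_div_iff₀ hb] at this
  have hyb' : y / b < π := by
    have := hy.2.trans_le (mul_le_mul_of_nonneg_left (min_le_left b b⁻¹) pi_pos.le)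
    rwa [div_lt_iff₀ hb]
  exact ⟨sin_pos_of_pos_of_lt_pi (by have := hy.1; positivity) hyb,
    sin_pos_of_pos_of_lt_pi (by have := hy.1; positivity) hyb'⟩

theorem norm_faddeevIntegrand_le {b : ℝ} (hb : 0 < b) (z : ℝ) {w : ℂ}
    (hw : w.im ∈ Ioo 0 (π * min b b⁻¹)) :
    ‖faddeevIntegrand b z w‖ ≤
      4 * Real.exp (2 * z * w.im) / (Real.sin (w.im * b) * Real.sin (w.im / b) * w.im) *
        (1 + w.re ^ 2)⁻¹ := by
  obtain ⟨hs₁, hs₂⟩ := sin_mul_pos_and_sin_div_pos hb hw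
  have h₁ := cosh_re_mul_abs_sin_im_le_norm_sinh (w * b)
  have h₂ := cosh_re_mul_abs_sin_im_le_norm_sinh (w / b)
  simp only [re_mul_ofReal, im_mul_ofReal, div_ofReal_re, div_ofReal_im, abs_of_pos hs₁,
    abs_of_pos hs₂] at h₁ h₂
  have h₃ : w.im ≤ ‖w‖ := (le_abs_self _).trans (abs_im_le_norm w)
  have hcosh : (1 + w.re ^ 2) / 4 ≤ Real.cosh (w.re * b) * Real.cosh (w.re / b) := by
    have hprod : |w.re * b| * |w.re / b| = w.re ^ 2 := by
      rw [← abs_mul, show w.re * b * (w.re / b) = w.re ^ 2 by field_simp, abs_sq]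
    nlinarith [one_add_abs_le_two_mul_cosh (w.re * b), one_add_abs_le_two_mul_cosh (w.re / b),
      abs_nonneg (w.re * b), abs_nonneg (w.re / b)]
  have hnorm : ‖faddeevIntegrand b z w‖ = Real.exp (2 * z * w.im) /
      (‖Complex.sinh (w * b)‖ * ‖Complex.sinh (w / b)‖ * ‖w‖) := by
    have hre : (-2 * I * z * w).re = 2 * z * w.im := by simp
    simp only [faddeevIntegrand, norm_mul, norm_div, norm_one, norm_exp, hre]
    ring
  have him : 0 < w.im := hw.1
  calc ‖faddeevIntegrand b z w‖
      ≤ Real.exp (2 * z * w.im) / (Real.cosh (w.re * b) * Real.sin (w.im * b) *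
          (Real.cosh (w.re / b) * Real.sin (w.im / b)) * w.im) := by
        rw [hnorm]; gcongr
    _ = 4 * Real.exp (2 * z * w.im) / (Real.sin (w.im * b) * Real.sin (w.im / b) * w.im) /
          (4 * (Real.cosh (w.re * b) * Real.cosh (w.re / b))) := by
        field_simp
    _ ≤ _ := by
        rw [div_eq_mul_inv _ (4 * _)]
        gcongr
        linarith

theorem differentiableAt_faddeevIntegrand {b : ℝ} (hb : 0 < b) (z : ℝ) {w : ℂ}
    (hw : w.im ∈ Ioo 0 (π * min b b⁻¹)) : DifferentiableAt ℂ (faddeevIntegrand b z) w := by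
  obtain ⟨hs₁, hs₂⟩ := sin_mul_pos_and_sin_div_pos hb hw
  have sinh_ne_zero {u : ℂ} (hu : 0 < Real.sin u.im) : Complex.sinh u ≠ 0 :=
    norm_pos_iff.1 <| (mul_pos (Real.cosh_pos _) (abs_pos_of_pos hu)).trans_le
      (cosh_re_mul_abs_sin_im_le_norm_sinh u)
  have hw₀ : w ≠ 0 := fun h => by simp [h] at hw
  have hden : Complex.sinh (w * b) * Complex.sinh (w / b) ≠ 0 :=
    mul_ne_zero (sinh_ne_zero (by simpa using hs₁)) (sinh_ne_zero (by simpa using hs₂))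
  unfold faddeevIntegrand
  fun_prop (disch := assumption)

theorem continuous_faddeevIntegrand_ofReal_add_mul_I {b δ : ℝ} (hb : 0 < b) (z : ℝ)
    (hδ : δ ∈ Ioo 0 (π * min b b⁻¹)) : Continuous fun x : ℝ => faddeevIntegrand b z (x + δ * I) :=
  continuous_iff_continuousAt.2 fun x =>
    (differentiableAt_faddeevIntegrand hb z (by simpa using hδ)).continuousAt.comp
      (f := fun x : ℝ => (x : ℂ) + δ * I) (by fun_prop)

theorem exists_norm_faddeevIntegrand_le {b : ℝ} (hb : 0 < b) (z : ℝ) {K : Set ℝ}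
    (hK : IsCompact K) (hKsub : K ⊆ Ioo 0 (π * min b b⁻¹)) :
    ∃ C, ∀ x : ℝ, ∀ y ∈ K, ‖faddeevIntegrand b z (x + y * I)‖ ≤ C * (1 + x ^ 2)⁻¹ := by
  set h : ℝ → ℝ := fun y => 4 * Real.exp (2 * z * y) / (Real.sin (y * b) * Real.sin (y / b) * y)
  have hcont : ContinuousOn h K := by
    refine ContinuousOn.div (by fun_prop) (by fun_prop) fun y hy => ?_
    obtain ⟨hs₁, hs₂⟩ := sin_mul_pos_and_sin_div_pos hb (hKsub hy)
    exact (mul_pos (mul_pos hs₁ hs₂) (hKsub hy).1).ne'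
  obtain ⟨C, hC⟩ := hK.exists_bound_of_continuousOn hcont
  refine ⟨C, fun x y hy => ?_⟩
  have hle := norm_faddeevIntegrand_le hb z (w := x + y * I) (by simpa using hKsub hy)
  simp only [add_re, add_im, ofReal_re, ofReal_im, mul_re, mul_im, I_re, I_im, mul_zero, mul_one,
    sub_zero, zero_add, add_zero] at hle
  exact hle.trans (by gcongr; exact (le_abs_self _).trans (hC y hy))

theorem integrable_faddeevIntegrand_ofReal_add_mul_I {b δ : ℝ} (hb : 0 < b) (z : ℝ)
    (hδ : δ ∈ Ioo 0 (π * min b b⁻¹)) : Integrable fun x : ℝ => faddeevIntegrand b z (x + δ * I) := by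
  obtain ⟨C, hC⟩ := exists_norm_faddeevIntegrand_le hb z isCompact_singleton
    (singleton_subset_iff.2 hδ)
  exact (integrable_inv_one_add_sq.const_mul C).mono'
    (continuous_faddeevIntegrand_ofReal_add_mul_I hb z hδ).aestronglyMeasurable
    (ae_of_all _ fun x => hC x δ rfl)

theorem integral_faddeevIntegrand_ofReal_add_mul_I_eq {b δ δ' : ℝ} (hb : 0 < b) (z : ℝ)
    (hδ : δ ∈ Ioo 0 (π * min b b⁻¹)) (hδ' : δ' ∈ Ioo 0 (π * min b b⁻¹)) :
    ∫ x : ℝ, faddeevIntegrand b z (x + δ * I) = ∫ x : ℝ, faddeevIntegrand b z (x + δ' * I) := by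
  have hK : [[δ, δ']] ⊆ Ioo 0 (π * min b b⁻¹) := ordConnected_Ioo.uIcc_subset hδ hδ'
  obtain ⟨C, hC⟩ := exists_norm_faddeevIntegrand_le hb z isCompact_uIcc hK
  refine integral_add_mul_I_eq_of_differentiableOn_strip
    (fun w hw => (differentiableAt_faddeevIntegrand hb z (hK hw.2)).differentiableWithinAt) hC
    (by simpa using tendsto_inv_one_add_sq_cocompact.const_mul C)
    (integrable_faddeevIntegrand_ofReal_add_mul_I hb z hδ)
    (integrable_faddeevIntegrand_ofReal_add_mul_I hb z hδ')

/-- Contour-independence and unitarity of Faddeev's quantum dilogarithm: for real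
`b > 0` and real `z`, the defining integral converges absolutely for every height
`δ ∈ (0, π·min(b, 1/b))`, is independent of `δ`, and `|exp(-I(δ)/4)| = 1`. -/
theorem faddeev_unitarity (b : ℝ) (hb : 0 < b) (z : ℝ) :
    (∀ δ : ℝ, δ ∈ Set.Ioo 0 (π * min b b⁻¹) →
      Integrable (fun x : ℝ =>
        Complex.exp (-2 * Complex.I * (z : ℂ) * ((x : ℂ) + Complex.I * (δ : ℂ))) /
          (Complex.sinh (((x : ℂ) + Complex.I * (δ : ℂ)) * (b : ℂ)) *
            Complex.sinh (((x : ℂ) + Complex.I * (δ : ℂ)) / (b : ℂ))) *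
          (1 / ((x : ℂ) + Complex.I * (δ : ℂ))))) ∧
    (∀ δ δ' : ℝ, δ ∈ Set.Ioo 0 (π * min b b⁻¹) → δ' ∈ Set.Ioo 0 (π * min b b⁻¹) →
      faddeevIntegral b z δ = faddeevIntegral b z δ') ∧
    (∀ δ : ℝ, δ ∈ Set.Ioo 0 (π * min b b⁻¹) →
      ‖Complex.exp (-faddeevIntegral b z δ / 4)‖ = 1) := by
  refine ⟨fun δ hδ => ?_, fun δ δ' hδ hδ' => ?_, fun δ _ => ?_⟩
  · simpa only [faddeevIntegrand_ofReal_add_mul_I] using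
      integrable_faddeevIntegrand_ofReal_add_mul_I hb z hδ
  · simpa only [faddeevIntegral_eq_integral_faddeevIntegrand] using
      integral_faddeevIntegrand_ofReal_add_mul_I_eq hb z hδ hδ'
  · rw [norm_exp, div_ofNat_re, neg_re, faddeevIntegral_re]
    simp
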